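/- Let A be a torsion-free abelian group, f : A → A a group endomorphism, and α, μ ∈ A, k ∈ ℤ elements satisfying f(μ) = μ and f(α) = α + k • μ. If for some positive integer n one has n • α + (n·(n−1)/2) • (k • μ) = 0, then α = 0 and k • μ = 0. -/

import Mathlib

theorem AddMonoidHom.zsmul_eq_zero_of_map_eq_add {A : Type*} [AddCommGroup A] (f : A →+ A)
    {α β : A} (hβ : f β = β) (hα : f α = α + β) {n m : ℤ} (h : n • α + m • β = 0) :
    n • β = 0 := by
  have hf : n • α + n • β + m • β = 0 := by
    simpa only [map_add, map_zsmul, hα, hβ, smul_add, map_zero] using congrArg f h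
  calc n • β = (n • α + n • β + m • β) - (n • α + m • β) := by abel
    _ = 0 := by rw [hf, h, sub_zero]

/-- Torsion-free abelian group core of Theorem 2.4. -/
theorem stmt_0 (A : Type*) [AddCommGroup A]
    (htf : ∀ (n : ℤ) (a : A), n ≠ 0 → n • a = 0 → a = 0)
    (f : A →+ A) (α μ : A) (k : ℤ)
    (hμ : f μ = μ) (hα : f α = α + k • μ)
    (n : ℤ) (hn : 0 < n)
    (h : n • α + (n * (n - 1) / 2) • (k • μ) = 0) :
    α = 0 ∧ k • μ = 0 := by
  have hkμ : k • μ = 0 :=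
    htf n _ hn.ne' (f.zsmul_eq_zero_of_map_eq_add (by rw [map_zsmul, hμ]) hα h)
  rw [hkμ, smul_zero, add_zero] at h
  exact ⟨htf n α hn.ne' h, hkμ⟩
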